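/- Let g = 2k with k ≥ 7, and let a be a complex number with a ≠ 0 and a ≠ 1. With the parameter choice a_{i,1} = i·a and a_{i,2} = i for i = 1, …, g−1, the 5×5 complex matrix whose columns are indexed by the pairs (i,j) ∈ {(1,k), (2,k), (k,g−2), (k,g−1), (k−1,k+1)} and whose rows consist of the five quantities ν_{ij,1}(a_{k,1}), ν'_{ij,1}(a_{k,1}), ν_{ij,2}(a_{k,2}), ν'_{ij,2}(a_{k,2}), τ_{ij,k} is invertible. -/

import Mathlib

open Polynomial Finset

/-- `A_h = ∏_{i=1}^{g-1} a_{i,h}`. -/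
noncomputable def Aprod (g : ℕ) (a : ℕ → ℕ → ℂ) (h : ℕ) : ℂ :=
  ∏ i ∈ Finset.Icc 1 (g - 1), a i h

/-- `d_2 = 1`, `d_1 = -A_1/A_2`. -/
noncomputable def dcoef (g : ℕ) (a : ℕ → ℕ → ℂ) (h : ℕ) : ℂ :=
  if h = 1 then -Aprod g a 1 / Aprod g a 2 else 1

/-- The polynomial `α_{i,h}`: for `1 ≤ i ≤ k = ⌊g/2⌋`,
`α_{i,h}(t) = t·∏_{r≠i}(t − a_{r,h})`; for `k+1 ≤ i ≤ g−1`,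
`α_{i,h}(t) = −(d_h a_{i,h}/A_h)·∏_{r≠i}(t − a_{r,h})`. -/
noncomputable def alphaPoly (g : ℕ) (a : ℕ → ℕ → ℂ) (i h : ℕ) : Polynomial ℂ :=
  if i ≤ g / 2 then
    X * ∏ r ∈ (Finset.Icc 1 (g - 1)).erase i, (X - C (a r h))
  else
    C (-(dcoef g a h * a i h / Aprod g a h)) *
      ∏ r ∈ (Finset.Icc 1 (g - 1)).erase i, (X - C (a r h))

/-- Wronskian `ν_{ij,h} = α_{i,h} α'_{j,h} − α_{j,h} α'_{i,h}`. -/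
noncomputable def nuPoly (g : ℕ) (a : ℕ → ℕ → ℂ) (i j h : ℕ) : Polynomial ℂ :=
  alphaPoly g a i h * derivative (alphaPoly g a j h)
    - alphaPoly g a j h * derivative (alphaPoly g a i h)

/-- Torsion values: for `1 ≤ m ≤ g` (with the convention `a_{g,h} = 0`),
`τ_{ij,m} = α'_{j,1}(a_{m,1})·α'_{i,2}(a_{m,2}) − α'_{i,1}(a_{m,1})·α'_{j,2}(a_{m,2})`;
for `m = g+1`, `τ_{ij,g+1} = c_{j,1}c_{i,2} − c_{i,1}c_{j,2}` where `c_{i,h}` is the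
coefficient of `t^{g-2}` in `α_{i,h}`. -/
noncomputable def tauVal (g : ℕ) (a : ℕ → ℕ → ℂ) (i j m : ℕ) : ℂ :=
  if m ≤ g then
    (derivative (alphaPoly g a j 1)).eval (if m = g then 0 else a m 1) *
        (derivative (alphaPoly g a i 2)).eval (if m = g then 0 else a m 2)
      - (derivative (alphaPoly g a i 1)).eval (if m = g then 0 else a m 1) *
        (derivative (alphaPoly g a j 2)).eval (if m = g then 0 else a m 2)
  else
    (alphaPoly g a j 1).coeff (g - 2) * (alphaPoly g a i 2).coeff (g - 2)
      - (alphaPoly g a i 1).coeff (g - 2) * (alphaPoly g a j 2).coeff (g - 2)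

/-- The `(5g−5) × ((g−1)(g−2)/2)` Gaussian matrix: the column indexed by the pair
`(i,j)`, `1 ≤ i < j ≤ g−1`, consists of the `2g−3` coefficients of `ν_{ij,1}`, the
`2g−3` coefficients of `ν_{ij,2}`, and then `τ_{ij,1}, …, τ_{ij,g+1}`. -/
noncomputable def gaussMatrix (g : ℕ) (a : ℕ → ℕ → ℂ) :
    Matrix (Fin (5 * g - 5))
      {p : Fin g × Fin g // 1 ≤ (p.1 : ℕ) ∧ (p.1 : ℕ) < (p.2 : ℕ)} ℂ :=
  fun r p =>
    if (r : ℕ) < 2 * g - 3 then (nuPoly g a (p.1.1 : ℕ) (p.1.2 : ℕ) 1).coeff (r : ℕ)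
    else if (r : ℕ) < 2 * (2 * g - 3) then
      (nuPoly g a (p.1.1 : ℕ) (p.1.2 : ℕ) 2).coeff ((r : ℕ) - (2 * g - 3))
    else tauVal g a (p.1.1 : ℕ) (p.1.2 : ℕ) ((r : ℕ) - 2 * (2 * g - 3) + 1)

/-- The parameters `a_{1,h}, …, a_{g−1,h}` (`h = 1,2`) are nonzero and pairwise
distinct. -/
def validParams (g : ℕ) (a : ℕ → ℕ → ℂ) : Prop :=
  ∀ h, h = 1 ∨ h = 2 →
    (∀ i ∈ Finset.Icc 1 (g - 1), a i h ≠ 0) ∧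
      ∀ i ∈ Finset.Icc 1 (g - 1), ∀ j ∈ Finset.Icc 1 (g - 1), i ≠ j → a i h ≠ a j h

/-- The parameter choice `a_{i,1} = i·a`, `a_{i,2} = i`. -/
noncomputable def aAP (a : ℂ) : ℕ → ℕ → ℂ := fun i h =>
  if h = 1 then (i : ℂ) * a else (i : ℂ)

/-!
At the node `P_k` every `α_{i,h}` with `i ≠ k` vanishes, so in the columns `(i,k)` and `(k,j)`
the Wronskian rows reduce to `α_{k,h}(a_{k,h})` times the first and second derivatives of
`α_i` (resp. `α_j`), while the column `(k-1,k+1)` is zero except for its torsion entry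
`τ_{k-1,k+1,k}`. The substitution `t ↦ a t` turns `α_{i,1}` into `± a^{g-1} α_{i,2}`, with
sign `+` for `i ≤ k` and `-` for `i > k`. This sign splits the remaining `4 × 4` block into
the two `2 × 2` Wronskians of `(α'_1, α'_2)` and of `(α'_{g-2}, α'_{g-1})` at `k`. These do not
vanish because, up to constants, `α_i = (X - a_k)(X - a_j) G` and `α_j = (X - a_k)(X - a_i) G`
differ in one simple root only. The same sign makes
`τ_{k-1,k+1,k} = -2 a^{g-2} α'_{k-1,2}(k) α'_{k+1,2}(k) ≠ 0`.
-/

namespace Polynomial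

variable {R : Type*} [CommRing R]

theorem eval_derivative_X_sub_C_mul_self (t : R) (q : R[X]) :
    (derivative ((X - C t) * q)).eval t = q.eval t := by
  simp [derivative_mul]

theorem wronskian_mul_right_mul_right (p q r : R[X]) :
    wronskian (p * r) (q * r) = r ^ 2 * wronskian p q := by
  simp only [wronskian, derivative_mul]
  ring

theorem wronskian_C_C (c d : R) : wronskian (C c) (C d) = 0 := by
  simp [wronskian]

theorem eval_wronskian_derivative_X_sub_C_mul (t b₁ b₂ : R) (G₁ G₂ : R[X]) :
    (wronskian (derivative ((X - C t) * ((X - C b₁) * G₁)))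
        (derivative ((X - C t) * ((X - C b₂) * G₂)))).eval t
      = 2 * (b₂ - b₁) * G₁.eval t * G₂.eval t
        + 2 * (t - b₁) * (t - b₂) * (wronskian G₁ G₂).eval t := by
  simp [wronskian, derivative_mul]
  ring

theorem C_mul_derivative_comp_C_mul_X {p q : R[X]} {a c : R}
    (h : p.comp (C a * X) = C c * q) :
    (C a * derivative p).comp (C a * X) = C c * derivative q := by
  have := congrArg derivative h
  simp only [derivative_comp, derivative_mul, derivative_C, derivative_X, zero_mul, zero_add,
    mul_one] at this
  simpa [mul_comp] using this

theorem eval_derivative_of_comp_C_mul_X {K : Type*} [Field K] {p q : K[X]} {a c : K}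
    (ha : a ≠ 0) (h : p.comp (C a * X) = C (a * c) * q) (t : K) :
    (derivative p).eval (t * a) = c * (derivative q).eval t := by
  have := congrArg (eval t) (C_mul_derivative_comp_C_mul_X h)
  simp only [mul_comp, C_comp, eval_mul, eval_C, eval_comp, eval_X] at this
  rw [mul_comm t]
  exact mul_left_cancel₀ ha (by rw [this, mul_assoc])

theorem eval_derivative_derivative_of_comp_C_mul_X {K : Type*} [Field K] {p q : K[X]} {a c : K}
    (ha : a ≠ 0) (h : p.comp (C a * X) = C (a ^ 2 * c) * q) (t : K) :
    (derivative (derivative p)).eval (t * a) = c * (derivative (derivative q)).eval t := by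
  have := congrArg (eval t) (C_mul_derivative_comp_C_mul_X (C_mul_derivative_comp_C_mul_X h))
  simp only [derivative_mul, derivative_C, zero_mul, zero_add, mul_comp, C_comp, eval_mul,
    eval_C, eval_comp, eval_X] at this
  rw [mul_comm t]
  rw [← mul_assoc, ← sq] at this
  exact mul_left_cancel₀ (pow_ne_zero 2 ha) (by rw [this, mul_assoc])

end Polynomial

section Alpha

variable (g : ℕ) (a : ℕ → ℕ → ℂ)

noncomputable def alphaLead (i h : ℕ) : ℂ[X] :=
  if i ≤ g / 2 then X else C (-(dcoef g a h * a i h / Aprod g a h))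

theorem alphaPoly_eq_alphaLead_mul (i h : ℕ) :
    alphaPoly g a i h
      = alphaLead g a i h * ∏ r ∈ (Icc 1 (g - 1)).erase i, (X - C (a r h)) := by
  unfold alphaPoly alphaLead
  split_ifs <;> rfl

variable {g a}

theorem alphaPoly_eq_X_sub_C_mul {i m : ℕ} (h : ℕ) (hm : m ∈ Icc 1 (g - 1)) (him : i ≠ m) :
    alphaPoly g a i h = (X - C (a m h)) *
      (alphaLead g a i h * ∏ r ∈ ((Icc 1 (g - 1)).erase i).erase m, (X - C (a r h))) := by
  rw [alphaPoly_eq_alphaLead_mul, ← mul_prod_erase _ _ (mem_erase.2 ⟨him.symm, hm⟩)]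
  ring

theorem alphaPoly_eq_X_sub_C_mul_X_sub_C_mul {i j m : ℕ} (h : ℕ) (hj : j ∈ Icc 1 (g - 1))
    (hm : m ∈ Icc 1 (g - 1)) (hij : i ≠ j) (him : i ≠ m) (hjm : j ≠ m) :
    alphaPoly g a i h = (X - C (a m h)) * ((X - C (a j h)) * (alphaLead g a i h *
      ∏ r ∈ (((Icc 1 (g - 1)).erase i).erase m).erase j, (X - C (a r h)))) := by
  rw [alphaPoly_eq_X_sub_C_mul h hm him,
    ← mul_prod_erase _ _ (mem_erase.2 ⟨hjm, mem_erase.2 ⟨hij.symm, hj⟩⟩)]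
  ring

theorem alphaPoly_isRoot {i m : ℕ} (h : ℕ) (hm : m ∈ Icc 1 (g - 1)) (him : i ≠ m) :
    (alphaPoly g a i h).IsRoot (a m h) := by
  simp [alphaPoly_eq_X_sub_C_mul h hm him]

theorem eval_derivative_alphaPoly {i m : ℕ} (h : ℕ) (hm : m ∈ Icc 1 (g - 1)) (him : i ≠ m) :
    (derivative (alphaPoly g a i h)).eval (a m h)
      = (alphaLead g a i h * ∏ r ∈ ((Icc 1 (g - 1)).erase i).erase m,
          (X - C (a r h))).eval (a m h) := by
  rw [alphaPoly_eq_X_sub_C_mul h hm him, eval_derivative_X_sub_C_mul_self]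

end Alpha

section Column

variable (g : ℕ) (a : ℕ → ℕ → ℂ)

noncomputable def nodeColumn (m i j : ℕ) : Fin 5 → ℂ :=
  ![(nuPoly g a i j 1).eval (a m 1), (derivative (nuPoly g a i j 1)).eval (a m 1),
    (nuPoly g a i j 2).eval (a m 2), (derivative (nuPoly g a i j 2)).eval (a m 2),
    tauVal g a i j m]

variable {g a}

theorem nodeColumn_of_isRoot_left {m i : ℕ} (j : ℕ) (h₁ : (alphaPoly g a i 1).IsRoot (a m 1))
    (h₂ : (alphaPoly g a i 2).IsRoot (a m 2)) :
    nodeColumn g a m i j =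
      ![-((derivative (alphaPoly g a i 1)).eval (a m 1) * (alphaPoly g a j 1).eval (a m 1)),
        -((derivative (derivative (alphaPoly g a i 1))).eval (a m 1) *
          (alphaPoly g a j 1).eval (a m 1)),
        -((derivative (alphaPoly g a i 2)).eval (a m 2) * (alphaPoly g a j 2).eval (a m 2)),
        -((derivative (derivative (alphaPoly g a i 2))).eval (a m 2) *
          (alphaPoly g a j 2).eval (a m 2)),
        tauVal g a i j m] := by
  ext r
  fin_cases r <;>
    simp [nodeColumn, nuPoly, h₁.eq_zero, h₂.eq_zero] <;> ring

theorem nodeColumn_of_isRoot_right {m j : ℕ} (i : ℕ) (h₁ : (alphaPoly g a j 1).IsRoot (a m 1))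
    (h₂ : (alphaPoly g a j 2).IsRoot (a m 2)) :
    nodeColumn g a m i j =
      ![(alphaPoly g a i 1).eval (a m 1) * (derivative (alphaPoly g a j 1)).eval (a m 1),
        (alphaPoly g a i 1).eval (a m 1) *
          (derivative (derivative (alphaPoly g a j 1))).eval (a m 1),
        (alphaPoly g a i 2).eval (a m 2) * (derivative (alphaPoly g a j 2)).eval (a m 2),
        (alphaPoly g a i 2).eval (a m 2) *
          (derivative (derivative (alphaPoly g a j 2))).eval (a m 2),
        tauVal g a i j m] := by
  ext r
  fin_cases r <;>
    simp [nodeColumn, nuPoly, h₁.eq_zero, h₂.eq_zero] <;> ring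

theorem nodeColumn_of_isRoot_of_isRoot {m i j : ℕ} (hi₁ : (alphaPoly g a i 1).IsRoot (a m 1))
    (hi₂ : (alphaPoly g a i 2).IsRoot (a m 2)) (hj₁ : (alphaPoly g a j 1).IsRoot (a m 1))
    (hj₂ : (alphaPoly g a j 2).IsRoot (a m 2)) :
    nodeColumn g a m i j = ![0, 0, 0, 0, tauVal g a i j m] := by
  rw [nodeColumn_of_isRoot_left j hi₁ hi₂, hj₁.eq_zero, hj₂.eq_zero]
  simp

end Column

section Nonvanishing

variable {g : ℕ} {a : ℕ → ℕ → ℂ} {h : ℕ}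

theorem Aprod_ne_zero (hv : validParams g a) (hh : h = 1 ∨ h = 2) : Aprod g a h ≠ 0 :=
  prod_ne_zero_iff.2 (hv h hh).1

theorem dcoef_ne_zero (hv : validParams g a) : dcoef g a h ≠ 0 := by
  unfold dcoef
  split_ifs
  · exact div_ne_zero (neg_ne_zero.2 (Aprod_ne_zero hv (.inl rfl))) (Aprod_ne_zero hv (.inr rfl))
  · exact one_ne_zero

theorem eval_alphaLead_ne_zero (hv : validParams g a) (hh : h = 1 ∨ h = 2) {i m : ℕ}
    (hi : i ∈ Icc 1 (g - 1)) (hm : m ∈ Icc 1 (g - 1)) :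
    (alphaLead g a i h).eval (a m h) ≠ 0 := by
  unfold alphaLead
  split_ifs
  · simpa using (hv h hh).1 m hm
  · simp [dcoef_ne_zero hv, (hv h hh).1 i hi, Aprod_ne_zero hv hh]

theorem eval_prod_X_sub_C_ne_zero (hv : validParams g a) (hh : h = 1 ∨ h = 2) {m : ℕ}
    (hm : m ∈ Icc 1 (g - 1)) {s : Finset ℕ} (hs : s ⊆ (Icc 1 (g - 1)).erase m) :
    (∏ r ∈ s, (X - C (a r h))).eval (a m h) ≠ 0 := by
  rw [eval_prod, prod_ne_zero_iff]
  intro r hr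
  obtain ⟨hrm, hr⟩ := mem_erase.1 (hs hr)
  simpa [sub_eq_zero] using (hv h hh).2 m hm r hr (Ne.symm hrm)

theorem eval_alphaPoly_self_ne_zero (hv : validParams g a) (hh : h = 1 ∨ h = 2) {i : ℕ}
    (hi : i ∈ Icc 1 (g - 1)) : (alphaPoly g a i h).eval (a i h) ≠ 0 := by
  rw [alphaPoly_eq_alphaLead_mul, eval_mul]
  exact mul_ne_zero (eval_alphaLead_ne_zero hv hh hi hi)
    (eval_prod_X_sub_C_ne_zero hv hh hi subset_rfl)

theorem eval_derivative_alphaPoly_ne_zero (hv : validParams g a) (hh : h = 1 ∨ h = 2)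
    {i m : ℕ} (hi : i ∈ Icc 1 (g - 1)) (hm : m ∈ Icc 1 (g - 1)) (him : i ≠ m) :
    (derivative (alphaPoly g a i h)).eval (a m h) ≠ 0 := by
  rw [eval_derivative_alphaPoly h hm him, eval_mul]
  refine mul_ne_zero (eval_alphaLead_ne_zero hv hh hi hm)
    (eval_prod_X_sub_C_ne_zero hv hh hm ?_)
  rw [erase_right_comm]
  exact erase_subset _ _

theorem eval_wronskian_derivative_alphaPoly_ne_zero (hv : validParams g a) (hh : h = 1 ∨ h = 2)
    {i j m : ℕ} (hi : i ∈ Icc 1 (g - 1)) (hj : j ∈ Icc 1 (g - 1)) (hm : m ∈ Icc 1 (g - 1))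
    (hij : i ≠ j) (him : i ≠ m) (hjm : j ≠ m) (hside : i ≤ g / 2 ↔ j ≤ g / 2) :
    (wronskian (derivative (alphaPoly g a i h)) (derivative (alphaPoly g a j h))).eval (a m h)
      ≠ 0 := by
  have hs : (((Icc 1 (g - 1)).erase j).erase m).erase i
      = (((Icc 1 (g - 1)).erase i).erase m).erase j := by
    ext r; simp only [mem_erase]; tauto
  have hP := eval_prod_X_sub_C_ne_zero hv hh hm
    (s := (((Icc 1 (g - 1)).erase i).erase m).erase j)
    fun r hr => by simp only [mem_erase] at hr ⊢; tauto
  have hlead : wronskian (alphaLead g a i h) (alphaLead g a j h) = 0 := by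
    by_cases hi' : i ≤ g / 2
    · simp only [alphaLead, if_pos hi', if_pos (hside.1 hi'), wronskian_self_eq_zero]
    · simp only [alphaLead, if_neg hi', if_neg (mt hside.2 hi'), wronskian_C_C]
  rw [alphaPoly_eq_X_sub_C_mul_X_sub_C_mul h hj hm hij him hjm,
    alphaPoly_eq_X_sub_C_mul_X_sub_C_mul h hi hm hij.symm hjm him, hs,
    eval_wronskian_derivative_X_sub_C_mul, wronskian_mul_right_mul_right, hlead]
  simp only [eval_mul, eval_zero, mul_zero, add_zero]
  have hai : a i h - a j h ≠ 0 := sub_ne_zero.2 ((hv h hh).2 i hi j hj hij)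
  exact mul_ne_zero (mul_ne_zero (mul_ne_zero two_ne_zero hai)
    (mul_ne_zero (eval_alphaLead_ne_zero hv hh hi hm) hP))
    (mul_ne_zero (eval_alphaLead_ne_zero hv hh hj hm) hP)

end Nonvanishing

section ArithmeticProgression

variable {g : ℕ} {a : ℂ}

theorem validParams_aAP (ha : a ≠ 0) : validParams g (aAP a) := by
  rintro h (rfl | rfl) <;> refine ⟨fun i hi => ?_, fun i _ j _ hij => ?_⟩ <;>
    simp_all [aAP] <;> omega

theorem Aprod_aAP_one : Aprod g (aAP a) 1 = a ^ (g - 1) * Aprod g (aAP a) 2 := by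
  simp [Aprod, aAP, prod_mul_distrib, mul_comm]

theorem prod_X_sub_C_aAP_comp (s : Finset ℕ) :
    (∏ r ∈ s, (X - C (aAP a r 1))).comp (C a * X)
      = C (a ^ s.card) * ∏ r ∈ s, (X - C (aAP a r 2)) := by
  rw [Polynomial.prod_comp, ← prod_const, map_prod, ← prod_mul_distrib]
  refine prod_congr rfl fun r _ => ?_
  simp only [aAP, sub_comp, X_comp, C_comp, if_true, if_neg (show (2 : ℕ) ≠ 1 by decide)]
  rw [C_mul]
  ring

theorem alphaLead_aAP_comp (ha : a ≠ 0) (i : ℕ) :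
    (alphaLead g (aAP a) i 1).comp (C a * X)
      = C ((if i ≤ g / 2 then 1 else -1) * a) * alphaLead g (aAP a) i 2 := by
  unfold alphaLead
  split_ifs
  · simp
  · rw [C_comp, ← C_mul]
    congr 1
    have hA := Aprod_ne_zero (validParams_aAP (g := g) ha) (.inr rfl)
    simp only [dcoef, Aprod_aAP_one, aAP, if_true, if_neg (show (2 : ℕ) ≠ 1 by decide)]
    field_simp

theorem alphaPoly_aAP_comp (ha : a ≠ 0) {i : ℕ} (hi : i ∈ Icc 1 (g - 1)) :
    (alphaPoly g (aAP a) i 1).comp (C a * X)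
      = C ((if i ≤ g / 2 then 1 else -1) * a ^ (g - 1)) * alphaPoly g (aAP a) i 2 := by
  have hcard : ((Icc 1 (g - 1)).erase i).card = g - 2 := by
    rw [card_erase_of_mem hi, Nat.card_Icc]; omega
  have hpow : a ^ (g - 1) = a * a ^ (g - 2) := by
    rw [← pow_succ']; congr 1; have := mem_Icc.1 hi; omega
  rw [alphaPoly_eq_alphaLead_mul, alphaPoly_eq_alphaLead_mul, mul_comp, alphaLead_aAP_comp ha,
    prod_X_sub_C_aAP_comp, hcard, hpow]
  simp only [C_mul]
  ring

theorem eval_derivative_alphaPoly_aAP (ha : a ≠ 0) {i : ℕ} (hi : i ∈ Icc 1 (g - 1))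
    (m : ℕ) :
    (derivative (alphaPoly g (aAP a) i 1)).eval (aAP a m 1)
      = (if i ≤ g / 2 then 1 else -1) * a ^ (g - 2)
        * (derivative (alphaPoly g (aAP a) i 2)).eval (aAP a m 2) := by
  have h := alphaPoly_aAP_comp ha hi
  rw [show a ^ (g - 1) = a * a ^ (g - 2) by
    rw [← pow_succ']; congr 1; have := mem_Icc.1 hi; omega, mul_left_comm] at h
  exact eval_derivative_of_comp_C_mul_X ha h m

theorem eval_derivative_derivative_alphaPoly_aAP (ha : a ≠ 0) (hg : 3 ≤ g) {i : ℕ}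
    (hi : i ∈ Icc 1 (g - 1)) (m : ℕ) :
    (derivative (derivative (alphaPoly g (aAP a) i 1))).eval (aAP a m 1)
      = (if i ≤ g / 2 then 1 else -1) * a ^ (g - 3)
        * (derivative (derivative (alphaPoly g (aAP a) i 2))).eval (aAP a m 2) := by
  have h := alphaPoly_aAP_comp ha hi
  rw [show a ^ (g - 1) = a ^ 2 * a ^ (g - 3) by rw [← pow_add]; congr 1; omega,
    mul_left_comm] at h
  exact eval_derivative_derivative_of_comp_C_mul_X ha h m

end ArithmeticProgression

section Node

variable {g : ℕ} {a : ℂ}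

theorem tauVal_aAP_ne_zero (ha : a ≠ 0) {i j m : ℕ} (hi : i ∈ Icc 1 (g - 1))
    (hj : j ∈ Icc 1 (g - 1)) (hm : m ∈ Icc 1 (g - 1)) (him : i ≠ m) (hjm : j ≠ m)
    (hile : i ≤ g / 2) (hjlt : g / 2 < j) :
    tauVal g (aAP a) i j m ≠ 0 := by
  have hmg := mem_Icc.1 hm
  have hv := validParams_aAP (g := g) ha
  rw [tauVal, if_pos (by omega), if_neg (by omega), if_neg (by omega),
    eval_derivative_alphaPoly_aAP ha hj, eval_derivative_alphaPoly_aAP ha hi, if_pos hile,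
    if_neg (not_le.2 hjlt)]
  have hui := eval_derivative_alphaPoly_ne_zero hv (.inr rfl) hi hm him
  have huj := eval_derivative_alphaPoly_ne_zero hv (.inr rfl) hj hm hjm
  ring_nf
  simp [ha, hui, huj]

theorem nodeColumn_aAP_of_le (ha : a ≠ 0) (hg : 3 ≤ g) {i m : ℕ} (hi : i ∈ Icc 1 (g - 1))
    (hm : m ∈ Icc 1 (g - 1)) (him : i ≠ m) (hile : i ≤ g / 2) :
    nodeColumn g (aAP a) m i m =
      ![-(a ^ (g - 2) * (derivative (alphaPoly g (aAP a) i 2)).eval (aAP a m 2)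
          * (alphaPoly g (aAP a) m 1).eval (aAP a m 1)),
        -(a ^ (g - 3) * (derivative (derivative (alphaPoly g (aAP a) i 2))).eval (aAP a m 2)
          * (alphaPoly g (aAP a) m 1).eval (aAP a m 1)),
        -((derivative (alphaPoly g (aAP a) i 2)).eval (aAP a m 2)
          * (alphaPoly g (aAP a) m 2).eval (aAP a m 2)),
        -((derivative (derivative (alphaPoly g (aAP a) i 2))).eval (aAP a m 2)
          * (alphaPoly g (aAP a) m 2).eval (aAP a m 2)),
        tauVal g (aAP a) i m m] := by
  rw [nodeColumn_of_isRoot_left m (alphaPoly_isRoot 1 hm him) (alphaPoly_isRoot 2 hm him),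
    eval_derivative_alphaPoly_aAP ha hi, eval_derivative_derivative_alphaPoly_aAP ha hg hi,
    if_pos hile, one_mul, one_mul]

theorem nodeColumn_aAP_of_lt (ha : a ≠ 0) (hg : 3 ≤ g) {j m : ℕ} (hj : j ∈ Icc 1 (g - 1))
    (hm : m ∈ Icc 1 (g - 1)) (hjm : j ≠ m) (hjlt : g / 2 < j) :
    nodeColumn g (aAP a) m m j =
      ![-(a ^ (g - 2) * (derivative (alphaPoly g (aAP a) j 2)).eval (aAP a m 2)
          * (alphaPoly g (aAP a) m 1).eval (aAP a m 1)),
        -(a ^ (g - 3) * (derivative (derivative (alphaPoly g (aAP a) j 2))).eval (aAP a m 2)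
          * (alphaPoly g (aAP a) m 1).eval (aAP a m 1)),
        (derivative (alphaPoly g (aAP a) j 2)).eval (aAP a m 2)
          * (alphaPoly g (aAP a) m 2).eval (aAP a m 2),
        (derivative (derivative (alphaPoly g (aAP a) j 2))).eval (aAP a m 2)
          * (alphaPoly g (aAP a) m 2).eval (aAP a m 2),
        tauVal g (aAP a) m j m] := by
  rw [nodeColumn_of_isRoot_right m (alphaPoly_isRoot 1 hm hjm) (alphaPoly_isRoot 2 hm hjm),
    eval_derivative_alphaPoly_aAP ha hj, eval_derivative_derivative_alphaPoly_aAP ha hg hj,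
    if_neg (not_le.2 hjlt)]
  ring_nf

end Node

theorem det_fin_five_jet_pattern {R : Type*} [CommRing R]
    (F₁ F₂ c d u₁ u₂ u₃ u₄ v₁ v₂ v₃ v₄ s₁ s₂ s₃ s₄ τ : R) :
    Matrix.det (Matrix.of ![
      ![-(c * u₁ * F₁), -(d * v₁ * F₁), -(u₁ * F₂), -(v₁ * F₂), s₁],
      ![-(c * u₂ * F₁), -(d * v₂ * F₁), -(u₂ * F₂), -(v₂ * F₂), s₂],
      ![-(c * u₃ * F₁), -(d * v₃ * F₁), u₃ * F₂, v₃ * F₂, s₃],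
      ![-(c * u₄ * F₁), -(d * v₄ * F₁), u₄ * F₂, v₄ * F₂, s₄],
      ![0, 0, 0, 0, τ]])
      = 4 * c * d * F₁ ^ 2 * F₂ ^ 2 * τ
        * (u₁ * v₂ - v₁ * u₂) * (u₃ * v₄ - v₃ * u₄) := by
  simp [Matrix.det_succ_row_zero, Fin.sum_univ_succ, Fin.succAbove]
  ring

theorem det_nodeColumns_aAP_ne_zero {g k : ℕ} (hgk : g = 2 * k) (hk : 3 ≤ k) {a : ℂ}
    (ha : a ≠ 0) :
    (Matrix.of ![nodeColumn g (aAP a) k 1 k, nodeColumn g (aAP a) k 2 k,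
      nodeColumn g (aAP a) k k (g - 2), nodeColumn g (aAP a) k k (g - 1),
      nodeColumn g (aAP a) k (k - 1) (k + 1)]).det ≠ 0 := by
  have hv := validParams_aAP (g := g) ha
  have mem : ∀ i, 1 ≤ i → i ≤ g - 1 → i ∈ Icc 1 (g - 1) :=
    fun i h₁ h₂ => mem_Icc.2 ⟨h₁, h₂⟩
  have hk₀ := mem k (by omega) (by omega)
  have h₁ := mem 1 le_rfl (by omega)
  have h₂ := mem 2 (by omega) (by omega)
  have h₃ := mem (g - 2) (by omega) (by omega)
  have h₄ := mem (g - 1) (by omega) le_rfl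
  rw [nodeColumn_aAP_of_le ha (by omega) h₁ hk₀ (by omega) (by omega),
    nodeColumn_aAP_of_le ha (by omega) h₂ hk₀ (by omega) (by omega),
    nodeColumn_aAP_of_lt ha (by omega) h₃ hk₀ (by omega) (by omega),
    nodeColumn_aAP_of_lt ha (by omega) h₄ hk₀ (by omega) (by omega),
    nodeColumn_of_isRoot_of_isRoot (alphaPoly_isRoot 1 hk₀ (by omega))
      (alphaPoly_isRoot 2 hk₀ (by omega)) (alphaPoly_isRoot 1 hk₀ (by omega))
      (alphaPoly_isRoot 2 hk₀ (by omega)),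
    det_fin_five_jet_pattern]
  have hτ := tauVal_aAP_ne_zero ha (mem (k - 1) (by omega) (by omega))
    (mem (k + 1) (by omega) (by omega)) hk₀ (by omega) (by omega) (by omega) (by omega)
  have hW₁₂ := eval_wronskian_derivative_alphaPoly_ne_zero hv (.inr rfl) h₁ h₂ hk₀
    (by omega) (by omega) (by omega) (by omega)
  have hW₃₄ := eval_wronskian_derivative_alphaPoly_ne_zero hv (.inr rfl) h₃ h₄ hk₀
    (by omega) (by omega) (by omega) (by omega)
  simp only [wronskian, eval_sub, eval_mul] at hW₁₂ hW₃₄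
  simp [ha, hτ, hW₁₂, hW₃₄, eval_alphaPoly_self_ne_zero hv (.inl rfl) hk₀,
    eval_alphaPoly_self_ne_zero hv (.inr rfl) hk₀]

theorem even_case_five_by_five_isUnit_general (g k : ℕ) (hgk : g = 2 * k) (hk : 7 ≤ k)
    (a : ℂ) (ha0 : a ≠ 0) :
    IsUnit (Matrix.of fun (r c : Fin 5) =>
      (fun (i j : ℕ) =>
        ![(nuPoly g (aAP a) i j 1).eval ((k : ℂ) * a),
          (Polynomial.derivative (nuPoly g (aAP a) i j 1)).eval ((k : ℂ) * a),
          (nuPoly g (aAP a) i j 2).eval (k : ℂ),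
          (Polynomial.derivative (nuPoly g (aAP a) i j 2)).eval (k : ℂ),
          tauVal g (aAP a) i j k] r)
      ((![(1, k), (2, k), (k, g - 2), (k, g - 1), (k - 1, k + 1)] : Fin 5 → ℕ × ℕ) c).1
      ((![(1, k), (2, k), (k, g - 2), (k, g - 1), (k - 1, k + 1)] : Fin 5 → ℕ × ℕ) c).2) := by
  rw [Matrix.isUnit_iff_isUnit_det, isUnit_iff_ne_zero, ← Matrix.det_transpose]
  convert det_nodeColumns_aAP_ne_zero hgk (by omega) ha0 using 2
  -- `aAP a k 1` and `aAP a k 2` reduce to `↑k * a` and `↑k`, so the columns agree by `rfl`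
  ext c r
  fin_cases c <;> rfl

/-- Let `g = 2k` with `k ≥ 7`, and let `a ∈ ℂ`, `a ≠ 0`, `a ≠ 1`.
With `a_{i,1} = i·a`, `a_{i,2} = i`, the 5×5 matrix whose columns are indexed by the
pairs `(1,k), (2,k), (k,g−2), (k,g−1), (k−1,k+1)` and whose rows are
`ν_{ij,1}(a_{k,1}), ν'_{ij,1}(a_{k,1}), ν_{ij,2}(a_{k,2}), ν'_{ij,2}(a_{k,2}), τ_{ij,k}`
is invertible. -/
theorem even_case_five_by_five_isUnit (g k : ℕ) (hgk : g = 2 * k) (hk : 7 ≤ k)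
    (a : ℂ) (ha0 : a ≠ 0) (ha1 : a ≠ 1) :
    IsUnit (Matrix.of fun (r c : Fin 5) =>
      (fun (i j : ℕ) =>
        ![(nuPoly g (aAP a) i j 1).eval ((k : ℂ) * a),
          (Polynomial.derivative (nuPoly g (aAP a) i j 1)).eval ((k : ℂ) * a),
          (nuPoly g (aAP a) i j 2).eval (k : ℂ),
          (Polynomial.derivative (nuPoly g (aAP a) i j 2)).eval (k : ℂ),
          tauVal g (aAP a) i j k] r)
      ((![(1, k), (2, k), (k, g - 2), (k, g - 1), (k - 1, k + 1)] : Fin 5 → ℕ × ℕ) c).1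
      ((![(1, k), (2, k), (k, g - 2), (k, g - 1), (k - 1, k + 1)] : Fin 5 → ℕ × ℕ) c).2) :=
  even_case_five_by_five_isUnit_general g k hgk hk a ha0
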